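/- arXiv:1503.07393 — 2 statements merged into one kernel-verified Lean document; each statement's English description precedes it below -/
import Mathlib

section
/- Let n be a natural number and let B_k^n denote the Bernstein polynomial of degree n. For every natural number r with r ≤ n and every k with 0 ≤ k ≤ r, the degree-elevation identity B_k^r(x) = Σ_{i=k}^{n-r+k} [ C(r,k)·C(n-r,i-k) / C(n,i) ] · B_i^n(x) holds as an identity of real polynomials. -/
open Polynomial

/-!
Multiplying `B_k^r` by `1 = ∑_j B_j^{n-r}` and using the product rule
`C(r+m, k+j) · B_k^r · B_j^m = C(r,k) · C(m,j) · B_{k+j}^{r+m}`, which is just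
`X^k X^j = X^(k+j)` and `(1-X)^(r-k) (1-X)^(m-j) = (1-X)^(r+m-k-j)`, expresses `B_k^r` in the
degree-`n` basis.
-/

theorem bernsteinPolynomial_mul_bernsteinPolynomial {R : Type*} [CommRing R] {m n k j : ℕ}
    (hk : k ≤ m) (hj : j ≤ n) :
    ((m + n).choose (k + j) : R[X]) * (bernsteinPolynomial R m k * bernsteinPolynomial R n j) =
      (m.choose k * n.choose j : R[X]) * bernsteinPolynomial R (m + n) (k + j) := by
  have hexp : m + n - (k + j) = (m - k) + (n - j) := by omega
  simp only [bernsteinPolynomial, hexp, pow_add]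
  ring

theorem bernsteinPolynomial_mul_bernsteinPolynomial_eq_C_mul {K : Type*} [Field K] [CharZero K]
    (m n k j : ℕ) :
    bernsteinPolynomial K m k * bernsteinPolynomial K n j =
      C ((m.choose k * n.choose j : K) / (m + n).choose (k + j)) *
        bernsteinPolynomial K (m + n) (k + j) := by
  rcases lt_or_ge m k with hk | hk
  · simp [bernsteinPolynomial.eq_zero_of_lt K hk, Nat.choose_eq_zero_of_lt hk]
  rcases lt_or_ge n j with hj | hj
  · simp [bernsteinPolynomial.eq_zero_of_lt K hj, Nat.choose_eq_zero_of_lt hj]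
  have hchoose : ((m + n).choose (k + j) : K) ≠ 0 :=
    Nat.cast_ne_zero.mpr (Nat.choose_pos (by omega)).ne'
  refine mul_left_cancel₀ (C_ne_zero.mpr hchoose) ?_
  rw [← mul_assoc _ (C _), ← C_mul, mul_div_cancel₀ _ hchoose]
  simpa using bernsteinPolynomial_mul_bernsteinPolynomial (R := K) hk hj

theorem bernstein_degree_elevation_general (n r k : ℕ) (hrn : r ≤ n) :
    bernsteinPolynomial ℝ r k =
      ∑ i ∈ Finset.Icc k (n - r + k),
        Polynomial.C (((r.choose k : ℝ) * ((n - r).choose (i - k) : ℝ)) / (n.choose i : ℝ)) *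
          bernsteinPolynomial ℝ n i := by
  calc bernsteinPolynomial ℝ r k
      = ∑ j ∈ Finset.range (n - r + 1),
          bernsteinPolynomial ℝ r k * bernsteinPolynomial ℝ (n - r) j := by
        rw [← Finset.mul_sum, bernsteinPolynomial.sum, mul_one]
    _ = ∑ j ∈ Finset.range (n - r + 1),
          C ((r.choose k * (n - r).choose j : ℝ) / n.choose (k + j)) *
            bernsteinPolynomial ℝ n (k + j) := by
        simp only [bernsteinPolynomial_mul_bernsteinPolynomial_eq_C_mul, Nat.add_sub_cancel' hrn]
    _ = _ := by
        rw [← Finset.Ico_add_one_right_eq_Icc, Finset.sum_Ico_eq_sum_range,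
          show n - r + k + 1 - k = n - r + 1 by omega]
        simp only [Nat.add_sub_cancel_left]

/-- Degree elevation for Bernstein polynomials: for `r ≤ n` and `k ≤ r`,
`B_k^r(x) = ∑_{i=k}^{n-r+k} (C(r,k)·C(n-r,i-k)/C(n,i)) · B_i^n(x)`. -/
theorem bernstein_degree_elevation (n r k : ℕ) (hrn : r ≤ n) (hkr : k ≤ r) :
    bernsteinPolynomial ℝ r k =
      ∑ i ∈ Finset.Icc k (n - r + k),
        Polynomial.C (((r.choose k : ℝ) * ((n - r).choose (i - k) : ℝ)) / (n.choose i : ℝ)) *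
          bernsteinPolynomial ℝ n i :=
  bernstein_degree_elevation_general n r k hrn
end

section
/- For natural numbers r and k with 0 ≤ k ≤ r, the product of generalized (half-integer) binomial coefficients satisfies C(r - 1/2, k) · C(r - 1/2, r - k) = C(2r, r) · C(2r, 2k) / 2^{2r}, as an identity of rational (or real) numbers. -/
/-! The falling factorial of `2a` of length `2k` interleaves those of `a - 1/2` and of `a` of
length `k`, which gives the duplication formula `C(a - 1/2, k) C(a, k) 4^k = C(2a, 2k) C(2k, k)`.
For a natural number `a = r`, multiplying this identity for `k` and for `r - k` leaves the identity
`C(2k, k) C(2r - 2k, r - k) C(2r, 2k) = C(2r, r) C(r, k)^2`, both sides being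
`(2r)! / (k! (r - k)!)^2`. -/

open Finset

/-- The generalized binomial coefficient `C(a, k) = a(a-1)⋯(a-k+1)/k!` for real `a`. -/
noncomputable def genChoose (a : ℝ) (k : ℕ) : ℝ :=
  (∏ j ∈ Finset.range k, (a - j)) / (k.factorial : ℝ)

lemma prod_range_two_mul_sub (a : ℝ) (k : ℕ) :
    ∏ i ∈ range (2 * k), (2 * a - i) =
      4 ^ k * (∏ j ∈ range k, (a - 1 / 2 - j)) * ∏ j ∈ range k, (a - j) := by
  induction k with
  | zero => simp
  | succ k ih =>
    rw [Nat.mul_succ, prod_range_succ, prod_range_succ, ih, prod_range_succ, prod_range_succ]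
    push_cast
    ring

lemma genChoose_mul_factorial (a : ℝ) (k : ℕ) :
    genChoose a k * k.factorial = ∏ j ∈ range k, (a - j) :=
  div_mul_cancel₀ _ (Nat.cast_ne_zero.mpr k.factorial_ne_zero)

lemma genChoose_natCast (n k : ℕ) : genChoose n k = n.choose k := by
  rw [genChoose, ← descPochhammer_eval_eq_prod_range, descPochhammer_eval_eq_descFactorial,
    Nat.descFactorial_eq_factorial_mul_choose, Nat.cast_mul,
    mul_div_cancel_left₀ _ (Nat.cast_ne_zero.mpr k.factorial_ne_zero)]

lemma genChoose_sub_half_mul_genChoose (a : ℝ) (k : ℕ) :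
    genChoose (a - 1 / 2) k * genChoose a k * 4 ^ k =
      genChoose (2 * a) (2 * k) * (2 * k).choose k := by
  have hfac : ((2 * k).factorial : ℝ) = (2 * k).choose k * k.factorial * k.factorial := by
    rw [two_mul, Nat.cast_add_choose]
    field_simp
  have hk : (k.factorial : ℝ) ≠ 0 := Nat.cast_ne_zero.mpr k.factorial_ne_zero
  apply mul_right_cancel₀ (mul_ne_zero hk hk)
  calc genChoose (a - 1 / 2) k * genChoose a k * 4 ^ k * (k.factorial * k.factorial)
      = 4 ^ k * (genChoose (a - 1 / 2) k * k.factorial) * (genChoose a k * k.factorial) := by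
        ring
    _ = genChoose (2 * a) (2 * k) * (2 * k).factorial := by
        rw [genChoose_mul_factorial, genChoose_mul_factorial, genChoose_mul_factorial,
          prod_range_two_mul_sub]
    _ = genChoose (2 * a) (2 * k) * (2 * k).choose k * (k.factorial * k.factorial) := by
        rw [hfac]
        ring

lemma genChoose_natCast_sub_half_mul_choose (r k : ℕ) :
    genChoose ((r : ℝ) - 1 / 2) k * r.choose k * 4 ^ k =
      (2 * r).choose (2 * k) * k.centralBinom := by
  have h := genChoose_sub_half_mul_genChoose r k
  rwa [genChoose_natCast, ← Nat.cast_ofNat, ← Nat.cast_mul, genChoose_natCast,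
    ← Nat.centralBinom_eq_two_mul_choose] at h

lemma Nat.centralBinom_mul_centralBinom_mul_choose (k j : ℕ) :
    k.centralBinom * j.centralBinom * (2 * (k + j)).choose (2 * k) =
      (k + j).centralBinom * (k + j).choose k ^ 2 := by
  rw [← Nat.cast_inj (R := ℚ)]
  simp only [Nat.centralBinom_eq_two_mul_choose, two_mul, Nat.cast_mul, Nat.cast_pow,
    Nat.cast_add_choose]
  rw [show k + j + (k + j) = k + k + (j + j) by ring, Nat.cast_add_choose]
  field_simp

/-- For `k ≤ r`,
`C(r - 1/2, k) · C(r - 1/2, r - k) = C(2r, r) · C(2r, 2k) / 2^(2r)`. -/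
theorem half_integer_binomial_product (r k : ℕ) (hkr : k ≤ r) :
    genChoose ((r : ℝ) - 1 / 2) k * genChoose ((r : ℝ) - 1 / 2) (r - k) =
      ((2 * r).choose r : ℝ) * ((2 * r).choose (2 * k) : ℝ) / 2 ^ (2 * r) := by
  obtain ⟨j, rfl⟩ := Nat.exists_eq_add_of_le hkr
  have hk := genChoose_natCast_sub_half_mul_choose (k + j) k
  have hj := genChoose_natCast_sub_half_mul_choose (k + j) j
  rw [Nat.choose_symm_of_eq_add (add_comm k j),
    Nat.choose_symm_of_eq_add (show 2 * (k + j) = 2 * j + 2 * k by ring)] at hj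
  have hcentral := congrArg (Nat.cast (R := ℝ)) (Nat.centralBinom_mul_centralBinom_mul_choose k j)
  simp only [Nat.cast_mul, Nat.cast_pow] at hcentral
  have hchoose : ((k + j).choose k : ℝ) ≠ 0 := Nat.cast_ne_zero.mpr (Nat.choose_pos (by omega)).ne'
  rw [Nat.add_sub_cancel_left, ← Nat.centralBinom_eq_two_mul_choose, eq_div_iff (by positivity),
    pow_mul]
  apply mul_right_cancel₀ (pow_ne_zero 2 hchoose)
  calc _ = (genChoose ((k + j : ℕ) - 1 / 2) k * (k + j).choose k * 4 ^ k) *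
        (genChoose ((k + j : ℕ) - 1 / 2) j * (k + j).choose k * 4 ^ j) := by
        norm_num [pow_add]
        ring
    _ = _ := by
        rw [hk, hj]
        linear_combination ((2 * (k + j)).choose (2 * k) : ℝ) * hcentral
end
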